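/- arXiv:2602.13027 — 2 statements merged into one kernel-verified Lean document; each statement's English description precedes it below -/
import Mathlib

section
/- Let G be a profinite group with closed subgroups H and V such that V is abelian and normal, H ∩ V = {1}, and G = HV (so G = H ⋉ V). Let χ : V → ℂ^× be a continuous homomorphism whose stabiliser S_χ = {h ∈ H : χ(hvh^{−1}) = χ(v) for all v ∈ V} has finite index in H, and let ℛ be a set of left coset representatives of S_χ in H (which also represents the cosets of S_χV in G). Let τ be a continuous finite-dimensional irreducible complex representation of S_χ with character θ_τ, and let θ_{τ,χ} : S_χV → ℂ be the class function θ_{τ,χ}(hv) = θ_τ(h)χ(v) for h ∈ S_χ, v ∈ V (the character of the tensor product of the inflation of τ with the canonical extension of χ). Then ∫_H Σ_{x ∈ ℛ, xhx^{−1} ∈ S_χV} θ_{τ,χ}(xhx^{−1}) dμ_H(h) = ∫_H Σ_{x ∈ ℛ, xhx^{−1} ∈ S_χ} θ_τ(xhx^{−1}) dμ_H(h), where μ_H is the normalised Haar measure on H. Equivalently, the multiplicity ⟨Ind_{S_χV}^G(θ_{τ,χ}), Ind_H^G(1_H)⟩_G equals ⟨Ind_{S_χ}^H(θ_τ), 1_H⟩_H.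 -/
open scoped Matrix Pointwise

noncomputable section RepZeta

/-- A bundled continuous finite-dimensional irreducible complex representation
of a topological group `G`. -/
structure IrrRep (G : Type*) [Group G] [TopologicalSpace G] where
  dim : ℕ
  dim_pos : 0 < dim
  ρ : G →* Matrix.GeneralLinearGroup (Fin dim) ℂ
  continuous_ρ : Continuous fun g => ((ρ g : Matrix.GeneralLinearGroup (Fin dim) ℂ) :
    Matrix (Fin dim) (Fin dim) ℂ)
  irreducible : ∀ W : Submodule ℂ (Fin dim → ℂ),
    (∀ (g : G) (v : Fin dim → ℂ), v ∈ W →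
      ((ρ g : Matrix.GeneralLinearGroup (Fin dim) ℂ) : Matrix (Fin dim) (Fin dim) ℂ) *ᵥ v ∈ W) →
    W = ⊥ ∨ W = ⊤

namespace IrrRep

variable {G : Type*} [Group G] [TopologicalSpace G]

/-- Equivalence (isomorphism) of representations. -/
def Equivalent (φ ψ : IrrRep G) : Prop :=
  ∃ (h : φ.dim = ψ.dim) (T : Matrix.GeneralLinearGroup (Fin ψ.dim) ℂ), ∀ g : G,
    (T : Matrix (Fin ψ.dim) (Fin ψ.dim) ℂ) *
        (Matrix.reindex (finCongr h) (finCongr h)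
          ((φ.ρ g : Matrix.GeneralLinearGroup (Fin φ.dim) ℂ) : Matrix (Fin φ.dim) (Fin φ.dim) ℂ))
      = ((ψ.ρ g : Matrix.GeneralLinearGroup (Fin ψ.dim) ℂ) : Matrix (Fin ψ.dim) (Fin ψ.dim) ℂ) *
          (T : Matrix (Fin ψ.dim) (Fin ψ.dim) ℂ)

/-- The subspace of `H`-fixed vectors of a representation. -/
def fixedSpace (φ : IrrRep G) (H : Subgroup G) : Submodule ℂ (Fin φ.dim → ℂ) where
  carrier := { v | ∀ h ∈ H,
    ((φ.ρ h : Matrix.GeneralLinearGroup (Fin φ.dim) ℂ) : Matrix (Fin φ.dim) (Fin φ.dim) ℂ) *ᵥ v = v }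
  add_mem' := by
    intro a b ha hb h hh
    rw [Matrix.mulVec_add, ha h hh, hb h hh]
  zero_mem' := by
    intro h hh
    rw [Matrix.mulVec_zero]
  smul_mem' := by
    intro c a ha h hh
    rw [Matrix.mulVec_smul, ha h hh]

/-- The multiplicity of the trivial representation of `H` in the restriction of `φ`,
i.e. the dimension of the space of `H`-fixed vectors. -/
def fixedDim (φ : IrrRep G) (H : Subgroup G) : ℕ :=
  Module.finrank ℂ ↥(φ.fixedSpace H)

end IrrRep

/-- Equivalence classes of continuous finite-dimensional irreducible complex representations. -/
def IrrClasses (G : Type*) [Group G] [TopologicalSpace G] :=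
  Quot (IrrRep.Equivalent (G := G))

/-- The representation zeta function `ζ_G(s) = Σ_{φ ∈ Irr(G)} (dim φ)^{-s}`. -/
def zetaFun (G : Type*) [Group G] [TopologicalSpace G] (s : ℂ) : ℂ :=
  ∑' c : IrrClasses G, ((Quot.out c).dim : ℂ) ^ (-s)

/-- The representation zeta function of `G` relative to a subgroup `H`:
`ζ^G_H(s) = Σ_{φ ∈ Irr(G)} m_H(φ) (dim φ)^{-s}`, where `m_H(φ)` is the dimension of the
space of `H`-fixed vectors of `φ` (the multiplicity of `φ` in `Ind_H^G 1`). -/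
def relZetaFun (G : Type*) [Group G] [TopologicalSpace G] (H : Subgroup G) (s : ℂ) : ℂ :=
  ∑' c : IrrClasses G, ((Quot.out c).fixedDim H : ℂ) * ((Quot.out c).dim : ℂ) ^ (-s)

/-- `r_d(G)`: the number of equivalence classes of continuous irreducible `d`-dimensional
complex representations of `G`. -/
def rCount (G : Type*) [Group G] [TopologicalSpace G] (d : ℕ) : ℕ :=
  Nat.card {c : IrrClasses G // (Quot.out c).dim = d}

/-- The abscissa of convergence of the representation zeta function of `G`. -/
def zetaAbscissa (G : Type*) [Group G] [TopologicalSpace G] : ℝ :=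
  sInf {σ : ℝ | Summable fun d : ℕ => (rCount G d : ℝ) * (d : ℝ) ^ (-σ)}

/-- A topological group is FAb if every open subgroup has finite abelianisation. -/
def IsFAb (G : Type*) [Group G] [TopologicalSpace G] : Prop :=
  ∀ U : Subgroup G, IsOpen (U : Set G) → Finite (Abelianization ↥U)

/-- The principal congruence subgroup of `SL_d(𝒪)` at level `I`. -/
def slCongruence (d : Type*) [DecidableEq d] [Fintype d] {𝒪 : Type*} [CommRing 𝒪] (I : Ideal 𝒪) :
    Subgroup (Matrix.SpecialLinearGroup d 𝒪) :=
  (Matrix.SpecialLinearGroup.map (Ideal.Quotient.mk I)).ker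

/-- The principal congruence subgroup of `GL_d(𝒪)` at level `I`. -/
def glCongruence (d : Type*) [DecidableEq d] [Fintype d] {𝒪 : Type*} [CommRing 𝒪] (I : Ideal 𝒪) :
    Subgroup (Matrix.GeneralLinearGroup d 𝒪) :=
  (Units.map (RingHom.toMonoidHom (RingHom.mapMatrix (Ideal.Quotient.mk I)))).ker

instance slTopologicalSpace (d : Type*) [DecidableEq d] [Fintype d] (R : Type*) [CommRing R]
    [TopologicalSpace R] : TopologicalSpace (Matrix.SpecialLinearGroup d R) :=
  TopologicalSpace.induced (fun A => (A : Matrix d d R)) inferInstance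

instance semidirectTopologicalSpace {N G : Type*} [Group N] [Group G] {φ : G →* MulAut N}
    [TopologicalSpace N] [TopologicalSpace G] : TopologicalSpace (N ⋊[φ] G) :=
  TopologicalSpace.induced (fun x => (x.left, x.right)) inferInstance

/-- The multiplicative group structure on `AddAut M` (as in the older Mathlib, where
`AddAut M` was a multiplicative group). -/
instance AddAut.group (M : Type*) [Add M] : Group (AddAut M) where
  mul g h := AddEquiv.trans h g
  one := AddEquiv.refl _
  inv := AddEquiv.symm
  mul_assoc _ _ _ := rfl
  one_mul _ := rfl
  mul_one _ := rfl
  inv_mul_cancel := AddEquiv.self_trans_symm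

@[simp]
theorem AddAut.group_mul_apply {M : Type*} [Add M] (e₁ e₂ : AddAut M) (m : M) :
    (e₁ * e₂) m = e₁ (e₂ m) :=
  rfl

@[simp]
theorem AddAut.group_one_apply {M : Type*} [Add M] (m : M) : (1 : AddAut M) m = m :=
  rfl

/-- The action of `GL_d(R)` on `R^d` by matrix-vector multiplication,
as additive automorphisms. -/
def mulVecAddAut {d : Type*} [DecidableEq d] [Fintype d] {R : Type*} [CommRing R] :
    Matrix.GeneralLinearGroup d R →* AddAut (d → R) where
  toFun g :=
    { toFun := fun v => ((g : Matrix.GeneralLinearGroup d R) : Matrix d d R) *ᵥ v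
      invFun := fun v => ((g⁻¹ : Matrix.GeneralLinearGroup d R) : Matrix d d R) *ᵥ v
      left_inv := fun v => by
        show _ *ᵥ _ *ᵥ _ = v
        rw [Matrix.mulVec_mulVec, Units.inv_mul, Matrix.one_mulVec]
      right_inv := fun v => by
        show _ *ᵥ _ *ᵥ _ = v
        rw [Matrix.mulVec_mulVec, Units.mul_inv, Matrix.one_mulVec]
      map_add' := fun v w => Matrix.mulVec_add _ v w }
  map_one' := by
    ext v
    simp [Matrix.one_mulVec]
  map_mul' g h := by
    ext v
    simp [Matrix.mulVec_mulVec]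

/-- The diagonal action of `GL_d(R)` on `(R^d)^ι`, as additive automorphisms. -/
def diagMulVecAddAut (ι : Type*) {d : Type*} [DecidableEq d] [Fintype d] {R : Type*} [CommRing R] :
    Matrix.GeneralLinearGroup d R →* AddAut (ι → d → R) where
  toFun g :=
    { toFun := fun v i => ((g : Matrix.GeneralLinearGroup d R) : Matrix d d R) *ᵥ v i
      invFun := fun v i => ((g⁻¹ : Matrix.GeneralLinearGroup d R) : Matrix d d R) *ᵥ v i
      left_inv := fun v => by
        funext i
        show _ *ᵥ _ *ᵥ _ = v i
        rw [Matrix.mulVec_mulVec, Units.inv_mul, Matrix.one_mulVec]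
      right_inv := fun v => by
        funext i
        show _ *ᵥ _ *ᵥ _ = v i
        rw [Matrix.mulVec_mulVec, Units.mul_inv, Matrix.one_mulVec]
      map_add' := fun v w => by
        funext i
        exact Matrix.mulVec_add _ (v i) (w i) }
  map_one' := by
    ext v
    simp [Matrix.one_mulVec]
  map_mul' g h := by
    ext v
    simp [Matrix.mulVec_mulVec]

/-- Passing from additive automorphisms of `α` to multiplicative automorphisms
of `Multiplicative α`. -/
def addAutToMulAut {α : Type*} [AddGroup α] : AddAut α →* MulAut (Multiplicative α) where
  toFun f :=
    { toFun := fun x => Multiplicative.ofAdd (f (Multiplicative.toAdd x))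
      invFun := fun x => Multiplicative.ofAdd (f.symm (Multiplicative.toAdd x))
      left_inv := fun x => by simp
      right_inv := fun x => by simp
      map_mul' := fun x y => by simp }
  map_one' := by ext x; rfl
  map_mul' f g := by ext x; rfl

/-- The natural action of `GL_d(R)` on `Multiplicative (R^d)`. -/
def mulVecMulAut {d : Type*} [DecidableEq d] [Fintype d] {R : Type*} [CommRing R] :
    Matrix.GeneralLinearGroup d R →* MulAut (Multiplicative (d → R)) :=
  addAutToMulAut.comp mulVecAddAut

/-- The diagonal action of `GL_d(R)` on `Multiplicative ((R^d)^ι)`. -/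
def diagMulVecMulAut (ι : Type*) {d : Type*} [DecidableEq d] [Fintype d] {R : Type*}
    [CommRing R] : Matrix.GeneralLinearGroup d R →* MulAut (Multiplicative (ι → d → R)) :=
  addAutToMulAut.comp (diagMulVecAddAut ι)

/-- The symmetric square of the natural (2-dimensional) representation, on matrices. -/
def sym2Map {R : Type*} [CommRing R] :
    Matrix (Fin 2) (Fin 2) R →* Matrix (Fin 3) (Fin 3) R where
  toFun A := !![A 0 0 ^ 2, 2 * A 0 0 * A 0 1, A 0 1 ^ 2;
                A 0 0 * A 1 0, A 0 0 * A 1 1 + A 0 1 * A 1 0, A 0 1 * A 1 1;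
                A 1 0 ^ 2, 2 * A 1 0 * A 1 1, A 1 1 ^ 2]
  map_one' := by
    ext i j
    fin_cases i <;> fin_cases j <;> simp [Matrix.one_apply, Matrix.vecHead, Matrix.vecTail]
  map_mul' A B := by
    ext i j
    fin_cases i <;> fin_cases j <;>
      simp [Matrix.mul_apply, Fin.sum_univ_succ] <;> ring

/-- The symmetric square of the natural representation of `SL₂(R)`, with values in `GL₃(R)`. -/
def sym2SL {R : Type*} [CommRing R] :
    Matrix.SpecialLinearGroup (Fin 2) R →* Matrix.GeneralLinearGroup (Fin 3) R :=
  MonoidHom.toHomUnits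
    (sym2Map.comp ((Units.coeHom (Matrix (Fin 2) (Fin 2) R)).comp
      Matrix.SpecialLinearGroup.toGL))

section Potent

/-- Torsion-freeness of a monoid, with its old Mathlib meaning. -/
def Monoid.IsTorsionFree (G : Type*) [Monoid G] : Prop :=
  ∀ g : G, g ≠ 1 → ¬IsOfFinOrder g

/-- The underlying set of the closed subgroup of a topological group topologically generated
by `p`-th powers. -/
def powerClosureSet (p : ℕ) (G : Type*) [Group G] [TopologicalSpace G] : Set G :=
  closure ((Subgroup.closure {x : G | ∃ g : G, g ^ p = x} : Subgroup G) : Set G)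

/-- A topological group is potent if (for odd `p`) the closure of `γ_{p-1}(G)` is
contained in the closed subgroup generated by `p`-th powers, and for `p = 2` the closure of
`[G,G]` is contained in the closed subgroup generated by fourth powers. -/
def IsPotent (p : ℕ) (G : Type*) [Group G] [TopologicalSpace G] : Prop :=
  if p = 2 then closure (((⊤ : Subgroup G).lowerCentralSeries 1 : Subgroup G) : Set G) ⊆ powerClosureSet 4 G
  else closure (((⊤ : Subgroup G).lowerCentralSeries (p - 2) : Subgroup G) : Set G) ⊆ powerClosureSet p G

/-- A topological group is powerful (for the prime `p`) if the closure of `[G,G]` is contained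
in the closed subgroup generated by `p`-th powers (fourth powers if `p = 2`). -/
def IsPowerful (p : ℕ) (G : Type*) [Group G] [TopologicalSpace G] : Prop :=
  closure (((⊤ : Subgroup G).lowerCentralSeries 1 : Subgroup G) : Set G)
    ⊆ powerClosureSet (if p = 2 then 4 else p) G

/-- A topological group is topologically finitely generated. -/
def IsTopFG (G : Type*) [Group G] [TopologicalSpace G] : Prop :=
  ∃ S : Finset G, closure ((Subgroup.closure (S : Set G) : Subgroup G) : Set G) = Set.univ

/-- Uniformly potent: potent, topologically finitely generated and torsion-free. -/
def IsUniformlyPotent (p : ℕ) (G : Type*) [Group G] [TopologicalSpace G] : Prop :=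
  IsPotent p G ∧ IsTopFG G ∧ Monoid.IsTorsionFree G

/-- Uniformly powerful: powerful, topologically finitely generated and torsion-free. -/
def IsUniformlyPowerful (p : ℕ) (G : Type*) [Group G] [TopologicalSpace G] : Prop :=
  IsPowerful p G ∧ IsTopFG G ∧ Monoid.IsTorsionFree G

/-- A topological group is pro-`p` if every open subgroup has `p`-power index. -/
def IsProP (p : ℕ) (G : Type*) [Group G] [TopologicalSpace G] : Prop :=
  ∀ U : Subgroup G, IsOpen (U : Set G) → ∃ k : ℕ, U.index = p ^ k

end Potent

end RepZeta

noncomputable section Statement10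

open MeasureTheory
open scoped Classical

/-- for a profinite group `G = H ⋉ V` with `V` abelian, a continuous
character `χ` of `V` with stabiliser `S = S_χ ≤ H` of finite index, a set `ℛ` of coset
representatives of `S` in `H`, an irreducible continuous representation `τ` of `S` and the
class function `θ_{τ,χ}(sv) = θ_τ(s)χ(v)` on `SV`, the multiplicity
`⟨Ind_{SV}^G(θ_{τ,χ}), Ind_H^G(1_H)⟩_G` equals `⟨Ind_S^H(θ_τ), 1_H⟩_H`, i.e. the two
induced-character integrals over `H` agree. -/
theorem statement10
    (G : Type) [Group G] [TopologicalSpace G] [IsTopologicalGroup G]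
    [CompactSpace G] [T2Space G] [TotallyDisconnectedSpace G]
    (H V S : Subgroup G) [V.Normal]
    [CompactSpace ↥H] [MeasurableSpace ↥H] [BorelSpace ↥H]
    (hVclosed : IsClosed (V : Set G))
    (hVab : ∀ a ∈ V, ∀ b ∈ V, a * b = b * a)
    (hHV_bot : H ⊓ V = ⊥) (hHV_top : H ⊔ V = ⊤)
    (χ : ↥V →* ℂˣ) (hχ : Continuous fun v => χ v)
    (hS : ∀ g : G, g ∈ S ↔ g ∈ H ∧ ∀ (v : G) (hv : v ∈ V),
      χ ⟨g * v * g⁻¹, (‹V.Normal› : V.Normal).conj_mem v hv g⟩ = χ ⟨v, hv⟩)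
    (hSfin : S.relIndex H ≠ 0)
    (R : Finset G) (hR_sub : ∀ x ∈ R, x ∈ H)
    (hR_rep : ∀ h ∈ H, ∃! x : G, x ∈ R ∧ x⁻¹ * h ∈ S)
    (d : ℕ) (hd : 0 < d)
    (τ : ↥S →* Matrix.GeneralLinearGroup (Fin d) ℂ)
    (hτ_cont : Continuous fun s => ((τ s : Matrix.GeneralLinearGroup (Fin d) ℂ) :
      Matrix (Fin d) (Fin d) ℂ))
    (hτ_irr : ∀ W : Submodule ℂ (Fin d → ℂ),
      (∀ (g : ↥S) (v : Fin d → ℂ), v ∈ W →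
        ((τ g : Matrix.GeneralLinearGroup (Fin d) ℂ) : Matrix (Fin d) (Fin d) ℂ) *ᵥ v ∈ W) →
      W = ⊥ ∨ W = ⊤)
    (Θ : G → ℂ)
    (hΘ : ∀ (s : G) (hs : s ∈ S) (v : G) (hv : v ∈ V),
      Θ (s * v) = Matrix.trace ((τ ⟨s, hs⟩ : Matrix.GeneralLinearGroup (Fin d) ℂ) :
        Matrix (Fin d) (Fin d) ℂ) * (χ ⟨v, hv⟩ : ℂ))
    (μ : Measure ↥H) [μ.IsHaarMeasure] (hμ : μ Set.univ = 1) :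
    ∫ h : ↥H, (∑ x ∈ R, if x * (h : G) * x⁻¹ ∈ S ⊔ V then Θ (x * (h : G) * x⁻¹) else 0) ∂μ
      = ∫ h : ↥H, (∑ x ∈ R, if hx : x * (h : G) * x⁻¹ ∈ S then
          Matrix.trace ((τ ⟨x * (h : G) * x⁻¹, hx⟩ : Matrix.GeneralLinearGroup (Fin d) ℂ) :
            Matrix (Fin d) (Fin d) ℂ) else 0) ∂μ := by
  refine congrArg _ (funext fun h => ?_)
  refine Finset.sum_congr rfl fun x hx => ?_
  set g := x * (h : G) * x⁻¹ with hg
  have hxH : x ∈ H := hR_sub x hx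
  have hgH : g ∈ H := H.mul_mem (H.mul_mem hxH h.2) (H.inv_mem hxH)
  have hSH : ∀ s, s ∈ S → s ∈ H := fun s hs => ((hS s).mp hs).1
  have hiff : g ∈ S ⊔ V ↔ g ∈ S := by
    constructor
    · intro hgSV
      have hmem : g ∈ ((S : Set G) * (V : Set G)) := by
        rw [← Subgroup.mul_normal]
        exact hgSV
      obtain ⟨s, hs, v, hv, hsv0⟩ := hmem
      have hsv : s * v = g := hsv0
      have hvH : v ∈ H := by
        have h2 : s⁻¹ * g ∈ H := H.mul_mem (H.inv_mem (hSH s hs)) hgH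
        rw [← hsv, ← mul_assoc, inv_mul_cancel, one_mul] at h2
        exact h2
      have hv1 : v = 1 := by
        have : v ∈ H ⊓ V := ⟨hvH, hv⟩
        rwa [hHV_bot, Subgroup.mem_bot] at this
      rw [← hsv, hv1, mul_one]
      exact hs
    · exact fun hgs => Subgroup.mem_sup_left hgs
  by_cases hgS : g ∈ S
  · rw [if_pos (hiff.mpr hgS), dif_pos hgS]
    have key := hΘ g hgS 1 V.one_mem
    rw [mul_one] at key
    have h1 : (⟨1, V.one_mem⟩ : ↥V) = 1 := rfl
    rw [key, h1, map_one, Units.val_one, mul_one]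
  · rw [if_neg (fun hc => hgS (hiff.mp hc)), dif_neg hgS]

end Statement10
end

section
/- Let 𝒪 be a compact discrete valuation ring of characteristic 0 with residue characteristic p, uniformiser π, and absolute ramification index e = e(𝒪,ℤ_p). Let 𝔥 be an 𝒪-Lie lattice (a Lie algebra over 𝒪 that is free of finite rank as 𝒪-module), let n ∈ ℕ, and let σ : 𝔥 → 𝔤𝔩ₙ(𝒪) be an injective 𝒪-Lie algebra homomorphism. Form the semidirect sum 𝔤 = 𝔥 ⊕ 𝒪ⁿ, i.e. the 𝒪-module 𝔥 × 𝒪ⁿ with Lie bracket [(x,u),(y,v)] = ([x,y], σ(x)v − σ(y)u). If p is odd and m ≥ e, then the Lie lattice πᵐ𝔤 is potent, i.e. γ_{p−1}(πᵐ𝔤) ⊆ p·πᵐ𝔤; if p = 2 and m ≥ 2e, then [πᵐ𝔤, πᵐ𝔤] ⊆ 4·πᵐ𝔤. Furthermore, under the same bound on m, if πᵐ𝔥 is powerful (i.e. [πᵐ𝔥, πᵐ𝔥] ⊆ p·πᵐ𝔥 for p odd, resp. ⊆ 4·πᵐ𝔥 for p = 2), then πᵐ𝔤 is powerful. -/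
open scoped Matrix Pointwise

noncomputable section RepZeta

/-- The (old Mathlib) multiplicative group structure on additive automorphisms. -/
instance addAutGroupOld {A : Type*} [Add A] : Group (AddAut A) where
  mul g h := AddEquiv.trans h g
  one := AddEquiv.refl _
  inv := AddEquiv.symm
  mul_assoc _ _ _ := rfl
  one_mul _ := rfl
  mul_one _ := rfl
  inv_mul_cancel := AddEquiv.self_trans_symm

@[simp]
theorem addAutGroupOld_mul_apply {A : Type*} [Add A] (e₁ e₂ : AddAut A) (a : A) :
    (e₁ * e₂) a = e₁ (e₂ a) :=
  rfl

@[simp]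
theorem addAutGroupOld_one_apply {A : Type*} [Add A] (a : A) : (1 : AddAut A) a = a :=
  rfl

end RepZeta

attribute [instance 100] LieRing.ofAssociativeRing

noncomputable section Statement13

/-- The span of brackets `{bk x y | x ∈ W₁, y ∈ W₂}` of two submodules, for a given
bracket operation `bk`. -/
def bracketSpan {R M : Type*} [CommRing R] [AddCommGroup M] [Module R M]
    (bk : M → M → M) (W₁ W₂ : Submodule R M) : Submodule R M :=
  Submodule.span R {z | ∃ x ∈ W₁, ∃ y ∈ W₂, z = bk x y}

/-- The lower central series `γ_{k+1}(W)` of a submodule `W` with respect to a bracket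
operation `bk`; here `lcsOf bk W 0 = γ₁(W) = W` and `lcsOf bk W (k+1) = [lcsOf bk W k, W]`. -/
def lcsOf {R M : Type*} [CommRing R] [AddCommGroup M] [Module R M]
    (bk : M → M → M) (W : Submodule R M) : ℕ → Submodule R M
  | 0 => W
  | k + 1 => bracketSpan bk (lcsOf bk W k) W

section AuxLemmas

open scoped Pointwise

variable {R M : Type*} [CommRing R] [AddCommGroup M] [Module R M]

lemma mem_smul_top' {a : R} {x : M} :
    x ∈ a • (⊤ : Submodule R M) ↔ ∃ y, a • y = x := by
  constructor
  · intro h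
    obtain ⟨y, -, rfl⟩ := h
    exact ⟨y, rfl⟩
  · rintro ⟨y, rfl⟩
    exact Submodule.smul_mem_pointwise_smul y a ⊤ trivial

lemma smul_top_mono' {a b : R} (h : a ∣ b) :
    b • (⊤ : Submodule R M) ≤ a • (⊤ : Submodule R M) := by
  obtain ⟨c, rfl⟩ := h
  intro x hx
  obtain ⟨y, rfl⟩ := mem_smul_top'.mp hx
  exact mem_smul_top'.mpr ⟨c • y, by rw [smul_smul]⟩

lemma bracketSpan_mono' {bk : M → M → M} {W₁ W₂ W₁' W₂' : Submodule R M}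
    (h1 : W₁ ≤ W₁') (h2 : W₂ ≤ W₂') :
    bracketSpan bk W₁ W₂ ≤ bracketSpan bk W₁' W₂' :=
  Submodule.span_mono (by rintro z ⟨x, hx, y, hy, rfl⟩; exact ⟨x, h1 hx, y, h2 hy, rfl⟩)

lemma bracketSpan_smul_top_le' {bk : M → M → M}
    (h1 : ∀ (a : R) x y, bk (a • x) y = a • bk x y)
    (h2 : ∀ (a : R) x y, bk x (a • y) = a • bk x y)
    (a b : R) :
    bracketSpan bk (a • (⊤ : Submodule R M)) (b • ⊤) ≤ (a * b) • (⊤ : Submodule R M) := by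
  rw [bracketSpan, Submodule.span_le]
  rintro z ⟨x, hx, y, hy, rfl⟩
  obtain ⟨x', rfl⟩ := mem_smul_top'.mp hx
  obtain ⟨y', rfl⟩ := mem_smul_top'.mp hy
  exact mem_smul_top'.mpr ⟨bk x' y', by rw [h1, h2, smul_smul]⟩

lemma lcsOf_smul_top_le' {bk : M → M → M}
    (h1 : ∀ (a : R) x y, bk (a • x) y = a • bk x y)
    (h2 : ∀ (a : R) x y, bk x (a • y) = a • bk x y)
    (a : R) (k : ℕ) :
    lcsOf bk (a • (⊤ : Submodule R M)) k ≤ a ^ (k + 1) • (⊤ : Submodule R M) := by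
  induction k with
  | zero => rw [pow_one]; exact le_rfl
  | succ k ih =>
      calc lcsOf bk (a • (⊤ : Submodule R M)) (k + 1)
          = bracketSpan bk (lcsOf bk (a • ⊤) k) (a • ⊤) := rfl
        _ ≤ bracketSpan bk (a ^ (k + 1) • ⊤) (a • ⊤) := bracketSpan_mono' ih le_rfl
        _ ≤ (a ^ (k + 1) * a) • ⊤ := bracketSpan_smul_top_le' h1 h2 _ _
        _ = a ^ (k + 1 + 1) • ⊤ := by rw [← pow_succ]

end AuxLemmas

/-- potency of the semidirect sum `πᵐ(𝔥 ⊕ 𝒪ⁿ)`, where `𝔥` acts on `𝒪ⁿ`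
through an injective Lie algebra homomorphism `σ : 𝔥 → 𝔤𝔩ₙ(𝒪)`. -/
theorem statement13
    (𝒪 : Type) [CommRing 𝒪] [IsDomain 𝒪] [IsDiscreteValuationRing 𝒪] [CharZero 𝒪]
    [TopologicalSpace 𝒪] [IsTopologicalRing 𝒪] [CompactSpace 𝒪]
    (p e : ℕ) (hp : p.Prime)
    [CharP (𝒪 ⧸ IsLocalRing.maximalIdeal 𝒪) p]
    (π : 𝒪) (hπ : Irreducible π)
    (he : Ideal.span {(p : 𝒪)} = IsLocalRing.maximalIdeal 𝒪 ^ e)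
    (𝔥 : Type) [LieRing 𝔥] [LieAlgebra 𝒪 𝔥] [Module.Free 𝒪 𝔥] [Module.Finite 𝒪 𝔥]
    (n : ℕ) (σ : 𝔥 →ₗ⁅𝒪⁆ Matrix (Fin n) (Fin n) 𝒪) (hσ : Function.Injective σ)
    (m : ℕ)
    -- `bk` is the Lie bracket of the semidirect sum `𝔤 = 𝔥 ⊕ 𝒪ⁿ`:
    (bk : 𝔥 × (Fin n → 𝒪) → 𝔥 × (Fin n → 𝒪) → 𝔥 × (Fin n → 𝒪))
    (hbk : ∀ x y : 𝔥 × (Fin n → 𝒪), bk x y = (⁅x.1, y.1⁆, σ x.1 *ᵥ y.2 - σ y.1 *ᵥ x.2)) :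
    -- (1) if `p` is odd and `m ≥ e` then `πᵐ𝔤` is potent: `γ_{p-1}(πᵐ𝔤) ⊆ p·πᵐ𝔤`
    (p ≠ 2 → e ≤ m →
      lcsOf bk (π ^ m • (⊤ : Submodule 𝒪 (𝔥 × (Fin n → 𝒪)))) (p - 2)
        ≤ (p : 𝒪) • (π ^ m • (⊤ : Submodule 𝒪 (𝔥 × (Fin n → 𝒪)))))
    -- (2) if `p = 2` and `m ≥ 2e` then `[πᵐ𝔤, πᵐ𝔤] ⊆ 4·πᵐ𝔤`
    ∧ (p = 2 → 2 * e ≤ m →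
      lcsOf bk (π ^ m • (⊤ : Submodule 𝒪 (𝔥 × (Fin n → 𝒪)))) 1
        ≤ (4 : 𝒪) • (π ^ m • (⊤ : Submodule 𝒪 (𝔥 × (Fin n → 𝒪)))))
    -- (3) under the same bound on `m`, if `πᵐ𝔥` is powerful then so is `πᵐ𝔤`
    ∧ (((p ≠ 2 ∧ e ≤ m) ∨ (p = 2 ∧ 2 * e ≤ m)) →
      lcsOf (fun x y : 𝔥 => ⁅x, y⁆) (π ^ m • (⊤ : Submodule 𝒪 𝔥)) 1
          ≤ ((if p = 2 then (4 : 𝒪) else (p : 𝒪)) • (π ^ m • (⊤ : Submodule 𝒪 𝔥))) →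
      lcsOf bk (π ^ m • (⊤ : Submodule 𝒪 (𝔥 × (Fin n → 𝒪)))) 1
        ≤ (if p = 2 then (4 : 𝒪) else (p : 𝒪)) •
            (π ^ m • (⊤ : Submodule 𝒪 (𝔥 × (Fin n → 𝒪))))) := by
  have h1 : ∀ (a : 𝒪) (x y : 𝔥 × (Fin n → 𝒪)), bk (a • x) y = a • bk x y := by
    intro a x y
    rw [hbk, hbk]
    refine Prod.ext ?_ ?_
    · simp [smul_lie]
    · simp [map_smul, Matrix.smul_mulVec, Matrix.mulVec_smul, smul_sub]
  have h2 : ∀ (a : 𝒪) (x y : 𝔥 × (Fin n → 𝒪)), bk x (a • y) = a • bk x y := by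
    intro a x y
    rw [hbk, hbk]
    refine Prod.ext ?_ ?_
    · simp [lie_smul]
    · simp [map_smul, Matrix.smul_mulVec, Matrix.mulVec_smul, smul_sub]
  have hmax : IsLocalRing.maximalIdeal 𝒪 = Ideal.span {π} :=
    (IsDiscreteValuationRing.irreducible_iff_uniformizer π).mp hπ
  have hassoc : Associated ((p : 𝒪)) (π ^ e) := by
    rw [← Ideal.span_singleton_eq_span_singleton, he, hmax, Ideal.span_singleton_pow]
  obtain ⟨u, hu⟩ := hassoc
  have hdvd : ∀ (c : 𝒪) (j K : ℕ), (∃ v : 𝒪ˣ, c * v = π ^ j) → j + m ≤ K →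
      (c * π ^ m) ∣ π ^ K := by
    rintro c j K ⟨v, hv⟩ hK
    refine ⟨(v : 𝒪) * π ^ (K - j - m), ?_⟩
    have h : (c * π ^ m) * ((v : 𝒪) * π ^ (K - j - m))
        = (c * v) * (π ^ m * π ^ (K - j - m)) := by ring
    rw [h, hv, ← pow_add, ← pow_add]
    congr 1
    omega
  have h4 : p = 2 → ∃ v : 𝒪ˣ, (4 : 𝒪) * v = π ^ (2 * e) := by
    intro hp2
    refine ⟨u * u, ?_⟩
    have h4e : (4 : 𝒪) = (p : 𝒪) * (p : 𝒪) := by subst hp2; norm_num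
    have h' : (4 : 𝒪) * ((u * u : 𝒪ˣ) : 𝒪) = ((p : 𝒪) * u) * ((p : 𝒪) * u) := by
      rw [h4e, Units.val_mul]; ring
    rw [h', hu, two_mul, pow_add]
  refine ⟨?_, ?_, ?_⟩
  · intro hp2 hem
    calc lcsOf bk (π ^ m • (⊤ : Submodule 𝒪 (𝔥 × (Fin n → 𝒪)))) (p - 2)
        ≤ (π ^ m) ^ (p - 2 + 1) • ⊤ := lcsOf_smul_top_le' h1 h2 _ _
      _ ≤ ((p : 𝒪) * π ^ m) • ⊤ := by
          apply smul_top_mono'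
          rw [← pow_mul]
          refine hdvd _ e _ ⟨u, hu⟩ ?_
          have h3 : 3 ≤ p := by have := hp.two_le; omega
          have hmm : m * 2 ≤ m * (p - 2 + 1) := Nat.mul_le_mul_left m (by omega)
          omega
      _ = (p : 𝒪) • (π ^ m • ⊤) := mul_smul _ _ _
  · intro hp2 hem
    calc lcsOf bk (π ^ m • (⊤ : Submodule 𝒪 (𝔥 × (Fin n → 𝒪)))) 1
        ≤ (π ^ m) ^ (1 + 1) • ⊤ := lcsOf_smul_top_le' h1 h2 _ _
      _ ≤ ((4 : 𝒪) * π ^ m) • ⊤ := by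
          apply smul_top_mono'
          rw [← pow_mul]
          exact hdvd _ (2 * e) _ (h4 hp2) (by omega)
      _ = (4 : 𝒪) • (π ^ m • ⊤) := mul_smul _ _ _
  · intro hcase _
    calc lcsOf bk (π ^ m • (⊤ : Submodule 𝒪 (𝔥 × (Fin n → 𝒪)))) 1
        ≤ (π ^ m) ^ (1 + 1) • ⊤ := lcsOf_smul_top_le' h1 h2 _ _
      _ ≤ ((if p = 2 then (4 : 𝒪) else (p : 𝒪)) * π ^ m) • ⊤ := by
          apply smul_top_mono'
          rw [← pow_mul]
          rcases hcase with ⟨hp2, hem⟩ | ⟨hp2, hem⟩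
          · rw [if_neg hp2]
            exact hdvd _ e _ ⟨u, hu⟩ (by omega)
          · rw [if_pos hp2]
            exact hdvd _ (2 * e) _ (h4 hp2) (by omega)
      _ = (if p = 2 then (4 : 𝒪) else (p : 𝒪)) • (π ^ m • ⊤) := mul_smul _ _ _

end Statement13
end
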